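/- arXiv:2102.10473 — 4 statements merged into one kernel-verified Lean document; each statement's English description precedes it below -/
import Mathlib

section
/- Let 𝒳 and 𝒵 be measurable spaces, let μ be a probability measure on 𝒳 (the law of the features X), and let κ be a Markov kernel from 𝒳 to ℝ (the true conditional distribution of the response Y given X), so that the joint law of (X, Y) is the composition-product μ ⊗ κ. Let κ̂ be a Markov kernel from 𝒳 to ℝ (the estimated conditional distribution). Suppose there exist a measurable function g : 𝒳 → 𝒵 and a Markov kernel η from 𝒵 to ℝ such that: (i) κ̂(x) = η(g(x)) for every x ∈ 𝒳, and (ii) η is a version of the conditional distribution of Y given g(X), i.e., the pushforward of μ ⊗ κ under the map (x, y) ↦ (g(x), y) equals (g_*μ) ⊗ η. If for g_*μ-almost every z the cumulative distribution function of η(z) is continuous, then the pushforward of μ ⊗ κ under the map (x, y) ↦ F_{κ̂(x)}(y), where F_{κ̂(x)}(y) = κ̂(x)((-∞, y]), equals the uniform distribution on [0,1]. -/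
open MeasureTheory ProbabilityTheory

open Filter Set


lemma pit_single (ν : Measure ℝ) [IsProbabilityMeasure ν]
    (hF : Continuous fun y => (ν (Set.Iic y)).toReal) :
    ν.map (fun y => (ν (Set.Iic y)).toReal) = volume.restrict (Set.Icc (0:ℝ) 1) := by
  set F : ℝ → ℝ := fun y => (ν (Set.Iic y)).toReal with hFdef
  have hmono : Monotone F := fun a b hab =>
    ENNReal.toReal_mono (measure_ne_top ν _) (measure_mono (Iic_subset_Iic.2 hab))
  have hFmeas : Measurable F := hmono.measurable
  have hFcdf : F = cdf ν := by funext y; rw [cdf_eq_real, measureReal_def]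
  have h0 : Tendsto F atBot (nhds 0) := by rw [hFcdf]; exact tendsto_cdf_atBot ν
  have h1 : Tendsto F atTop (nhds 1) := by rw [hFcdf]; exact tendsto_cdf_atTop ν
  have hF0 : ∀ y, 0 ≤ F y := fun y => ENNReal.toReal_nonneg
  have hF1 : ∀ y, F y ≤ 1 := by intro y; rw [hFcdf]; exact cdf_le_one ν y
  refine Measure.ext_of_Iic _ _ (fun t => ?_)
  rw [Measure.map_apply hFmeas measurableSet_Iic, Measure.restrict_apply measurableSet_Iic]
  rcases lt_or_ge t 0 with ht | ht
  · have he : F ⁻¹' Iic t = ∅ := by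
      ext y; simp only [mem_preimage, mem_Iic, mem_empty_iff_false, iff_false, not_le]
      exact lt_of_lt_of_le ht (hF0 y)
    rw [he]
    have h2 : Iic t ∩ Icc (0:ℝ) 1 = ∅ := by
      ext y; simp only [mem_inter_iff, mem_Iic, mem_Icc, mem_empty_iff_false, iff_false]
      rintro ⟨h1', h2', _⟩; linarith
    simp [h2]
  rcases le_or_gt 1 t with ht1 | ht1
  · have hu : F ⁻¹' Iic t = univ := by
      ext y; simp only [mem_preimage, mem_Iic, mem_univ, iff_true]
      exact le_trans (hF1 y) ht1
    rw [hu]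
    have h2 : Iic t ∩ Icc (0:ℝ) 1 = Icc 0 1 := by
      ext y; simp only [mem_inter_iff, mem_Iic, mem_Icc]
      exact ⟨fun ⟨_, h⟩ => h, fun ⟨h1', h2'⟩ => ⟨le_trans h2' ht1, h1', h2'⟩⟩
    rw [h2, Real.volume_Icc, measure_univ]
    norm_num
  -- 0 ≤ t < 1
  have hIcc : Iic t ∩ Icc (0:ℝ) 1 = Icc 0 t := by
    ext y; simp only [mem_inter_iff, mem_Iic, mem_Icc]
    exact ⟨fun ⟨h, h0', _⟩ => ⟨h0', h⟩, fun ⟨h0', h⟩ => ⟨h, h0', le_trans h ht1.le⟩⟩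
  rw [hIcc, Real.volume_Icc]
  have hvol : ENNReal.ofReal (t - 0) = ENNReal.ofReal t := by norm_num
  rw [hvol]
  set A := F ⁻¹' Iic t with hA
  rcases eq_empty_or_nonempty A with hAe | hAne
  · have ht0 : t = 0 := by
      by_contra h
      have htpos : 0 < t := lt_of_le_of_ne ht (Ne.symm h)
      obtain ⟨y, hy⟩ := (h0.eventually (eventually_lt_nhds htpos)).exists
      have hm : y ∈ A := le_of_lt hy
      rw [hAe] at hm
      exact hm
    rw [hAe, ht0]; simp
  · have hclosed : IsClosed A := IsClosed.preimage hF isClosed_Iic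
    obtain ⟨y₀, hy₀⟩ := (h1.eventually (eventually_gt_nhds ht1)).exists_forall_of_atTop
    have hbdd : BddAbove A := by
      refine ⟨y₀, fun y hy => ?_⟩
      by_contra hc
      push_neg at hc
      exact absurd hy (not_le.2 (hy₀ y hc.le))
    set c := sSup A with hc
    have hcA : c ∈ A := hclosed.csSup_mem hAne hbdd
    have hAIic : A = Iic c := by
      ext y
      exact ⟨fun hy => le_csSup hbdd hy, fun hy => le_trans (hmono hy) hcA⟩
    have hFc_eq : F c = t := by
      refine le_antisymm hcA ?_
      by_contra hlt
      push_neg at hlt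
      have hy₁ : t ≤ F y₀ := (hy₀ y₀ le_rfl).le
      have hcy₀ : c ≤ y₀ := by
        by_contra hcy
        push_neg at hcy
        exact absurd (hmono hcy.le) (not_le.2 (lt_of_le_of_lt hcA (hy₀ _ le_rfl)))
      obtain ⟨y, hy_mem, hy_eq⟩ := intermediate_value_Icc hcy₀ hF.continuousOn
        (⟨hlt.le, hy₁⟩ : t ∈ Icc (F c) (F y₀))
      have hyA : y ∈ A := le_of_eq hy_eq
      rw [hAIic] at hyA
      have := hmono hyA
      rw [hy_eq] at this
      exact absurd this (not_le.2 hlt)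
    rw [hAIic]
    have heq : ν (Iic c) = ENNReal.ofReal ((ν (Iic c)).toReal) :=
      (ENNReal.ofReal_toReal (measure_ne_top ν _)).symm
    rw [heq]
    congr 1

/-- Insensitivity of PIT to covariate transformations: if the estimated conditional
distribution `κ̂` satisfies `κ̂ x = η (g x)` where `η` is a version of the conditional
distribution of `Y` given `g X`, and the CDFs of `η z` are a.e. continuous, then the
PIT values of the joint law `μ ⊗ₘ κ` under `κ̂` are uniform on `[0,1]`. -/
theorem pit_insensitive_to_covariate_transformations
    {𝒳 𝒵 : Type*} [MeasurableSpace 𝒳] [MeasurableSpace 𝒵]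
    (μ : Measure 𝒳) [IsProbabilityMeasure μ]
    (κ : Kernel 𝒳 ℝ) [IsMarkovKernel κ]
    (κhat : Kernel 𝒳 ℝ) [IsMarkovKernel κhat]
    (g : 𝒳 → 𝒵) (hg : Measurable g)
    (η : Kernel 𝒵 ℝ) [IsMarkovKernel η]
    (hmodel : ∀ x, κhat x = η (g x))
    (hcond : (μ ⊗ₘ κ).map (fun p => (g p.1, p.2)) = (μ.map g) ⊗ₘ η)
    (hcont : ∀ᵐ z ∂(μ.map g), Continuous (fun y => (η z (Set.Iic y)).toReal)) :
    (μ ⊗ₘ κ).map (fun p => (κhat p.1 (Set.Iic p.2)).toReal)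
      = volume.restrict (Set.Icc (0 : ℝ) 1) := by
  have : IsProbabilityMeasure (μ.map g) := Measure.isProbabilityMeasure_map hg.aemeasurable
  -- joint measurability of the PIT map on 𝒵 × ℝ
  have hmeas0 : Measurable fun p : 𝒵 × ℝ => η p.1 (Set.Iic p.2) := by
    have ht : MeasurableSet {p : (𝒵 × ℝ) × ℝ | p.2 ≤ p.1.2} :=
      measurableSet_le measurable_snd measurable_fst.snd
    exact Kernel.measurable_kernel_prodMk_left
      (κ := η.comap Prod.fst measurable_fst) ht
  have hf : Measurable fun p : 𝒵 × ℝ => (η p.1 (Set.Iic p.2)).toReal :=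
    hmeas0.ennreal_toReal
  -- rewrite the map through (g, id)
  have hstep : (μ ⊗ₘ κ).map (fun p => (κhat p.1 (Set.Iic p.2)).toReal)
      = ((μ.map g) ⊗ₘ η).map (fun p : 𝒵 × ℝ => (η p.1 (Set.Iic p.2)).toReal) := by
    rw [← hcond, Measure.map_map hf
      (show Measurable fun p : 𝒳 × ℝ => (g p.1, p.2) from
        (hg.comp measurable_fst).prodMk measurable_snd)]
    congr 1
    funext p
    simp [hmodel p.1]
  rw [hstep]
  refine Measure.ext fun s hs => ?_
  rw [Measure.map_apply hf hs,
    Measure.compProd_apply (hf hs)]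
  have hae : ∀ᵐ z ∂(μ.map g),
      η z (Prod.mk z ⁻¹' ((fun p : 𝒵 × ℝ => (η p.1 (Set.Iic p.2)).toReal) ⁻¹' s))
        = volume.restrict (Set.Icc (0:ℝ) 1) s := by
    filter_upwards [hcont] with z hz
    have hmono : Monotone fun y => (η z (Set.Iic y)).toReal := fun a b hab =>
      ENNReal.toReal_mono (measure_ne_top _ _) (measure_mono (Iic_subset_Iic.2 hab))
    have : Prod.mk z ⁻¹' ((fun p : 𝒵 × ℝ => (η p.1 (Set.Iic p.2)).toReal) ⁻¹' s)
        = (fun y => (η z (Set.Iic y)).toReal) ⁻¹' s := rfl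
    rw [this, ← Measure.map_apply hmono.measurable hs, pit_single (η z) hz]
  rw [lintegral_congr_ae hae, lintegral_const, measure_univ, mul_one]
end

section
/- Let λ be a σ-finite measure on a measurable space 𝒴 (e.g., Lebesgue measure on ℝᵖ), and let f : 𝒴 → [0,∞) be a measurable probability density with respect to λ, i.e., μ := λ.withDensity f is a probability measure. Define the HPD value H(y) = μ({y' : f(y') ≥ f(y)}). Assume that for μ-almost every y, μ({y' : f(y') = f(y)}) = 0 (equivalently, the pushforward of μ under f is atomless). Then the pushforward of μ under the map y ↦ H(y) equals the uniform distribution on [0,1]. -/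
open MeasureTheory

/-- HPD values are uniform: if `μ = lam.withDensity f` is a probability measure with
density `f` w.r.t. a σ-finite measure `lam`, and for `μ`-a.e. `y` the level set
`{y' : f y' = f y}` is `μ`-null, then the pushforward of `μ` under the HPD value
`H y = μ {y' : f y' ≥ f y}` is uniform on `[0,1]`. -/
theorem hpd_uniform
    {𝒴 : Type*} [MeasurableSpace 𝒴]
    (lam : Measure 𝒴) [SigmaFinite lam]
    (f : 𝒴 → ℝ) (hf_nonneg : ∀ y, 0 ≤ f y) (hf_meas : Measurable f)
    (μ : Measure 𝒴) (hμ : μ = lam.withDensity (fun y => ENNReal.ofReal (f y)))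
    [IsProbabilityMeasure μ]
    (hlevel : ∀ᵐ y ∂μ, μ {y' | f y' = f y} = 0) :
    μ.map (fun y => (μ {y' | f y' ≥ f y}).toReal)
      = volume.restrict (Set.Icc (0 : ℝ) 1) := by
  -- no atoms for the level sets
  have hatom : ∀ c : ℝ, μ {y | f y = c} = 0 := by
    intro c
    by_contra hc
    rw [Filter.eventually_iff, mem_ae_iff] at hlevel
    apply hc
    refine le_antisymm (le_trans (measure_mono ?_) hlevel.le) zero_le
    intro y hy
    simp only [Set.mem_setOf_eq] at hy
    simp only [Set.mem_compl_iff, Set.mem_setOf_eq, hy]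
    exact hc
  -- survival function
  set G : ℝ → ENNReal := fun t => μ {y | t ≤ f y} with hG
  have hGset : ∀ t, MeasurableSet {y | t ≤ f y} := fun t =>
    measurableSet_le measurable_const hf_meas
  have hGanti : Antitone G := fun s t hst =>
    measure_mono (fun y (hy : t ≤ f y) => hst.trans hy)
  have hGfin : ∀ t, G t ≠ ⊤ := fun t => measure_ne_top μ _
  have hGle1 : ∀ t, G t ≤ 1 := fun t => prob_le_one
  set g : ℝ → ℝ := fun t => (G t).toReal with hg
  have hganti : Antitone g := fun s t hst =>
    (ENNReal.toReal_le_toReal (hGfin t) (hGfin s)).mpr (hGanti hst)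
  have hgmeas : Measurable g := hganti.measurable
  have hgnonneg : ∀ t, 0 ≤ g t := fun t => ENNReal.toReal_nonneg
  have hHmeas : Measurable (fun y => (μ {y' | f y' ≥ f y}).toReal) :=
    hgmeas.comp hf_meas
  refine Measure.ext_of_Iic _ _ (fun a => ?_)
  rw [Measure.map_apply hHmeas measurableSet_Iic,
      Measure.restrict_apply measurableSet_Iic]
  rcases lt_or_ge a 0 with ha | ha0
  · -- a < 0 : both sides zero
    have h1 : (fun y => (μ {y' | f y' ≥ f y}).toReal) ⁻¹' Set.Iic a = ∅ := by
      ext y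
      simp only [Set.mem_preimage, Set.mem_Iic, Set.mem_empty_iff_false, iff_false, not_le]
      exact lt_of_lt_of_le ha ENNReal.toReal_nonneg
    have h2 : Set.Iic a ∩ Set.Icc (0:ℝ) 1 = ∅ := by
      ext x
      simp only [Set.mem_inter_iff, Set.mem_Iic, Set.mem_Icc, Set.mem_empty_iff_false, iff_false]
      rintro ⟨h1, h2, -⟩
      linarith
    rw [h1, h2]
    simp
  rcases le_or_gt 1 a with ha1 | ha1
  · -- a ≥ 1 : both sides one
    have h1 : (fun y => (μ {y' | f y' ≥ f y}).toReal) ⁻¹' Set.Iic a = Set.univ := by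
      ext y
      simp only [Set.mem_preimage, Set.mem_Iic, Set.mem_univ, iff_true]
      refine le_trans ?_ ha1
      have := hGle1 (f y)
      calc (μ {y' | f y' ≥ f y}).toReal = (G (f y)).toReal := rfl
        _ ≤ (1 : ENNReal).toReal := (ENNReal.toReal_le_toReal (hGfin _) (by simp)).mpr this
        _ = 1 := by simp
    have h2 : Set.Iic a ∩ Set.Icc (0:ℝ) 1 = Set.Icc (0:ℝ) 1 := by
      ext x
      simp only [Set.mem_inter_iff, Set.mem_Iic, Set.mem_Icc, and_iff_right_iff_imp]
      rintro ⟨-, hx⟩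
      linarith
    rw [h1, h2, Real.volume_Icc, measure_univ]
    simp
  -- main case : 0 ≤ a < 1
  have h2 : Set.Iic a ∩ Set.Icc (0:ℝ) 1 = Set.Icc (0:ℝ) a := by
    ext x
    simp only [Set.mem_inter_iff, Set.mem_Iic, Set.mem_Icc]
    constructor
    · rintro ⟨hx1, hx2, -⟩; exact ⟨hx2, hx1⟩
    · rintro ⟨hx1, hx2⟩; exact ⟨hx2, hx1, by linarith⟩
  rw [h2, Real.volume_Icc, sub_zero]
  set a' := ENNReal.ofReal a with ha'
  have ha'lt1 : a' < 1 := ENNReal.ofReal_lt_one.mpr ha1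
  set A : Set ℝ := {t | G t ≤ a'} with hA
  have hpre : (fun y => (μ {y' | f y' ≥ f y}).toReal) ⁻¹' Set.Iic a = f ⁻¹' A := by
    ext y
    simp only [Set.mem_preimage, Set.mem_Iic, hA, Set.mem_setOf_eq]
    exact (ENNReal.le_ofReal_iff_toReal_le (hGfin (f y)) ha0).symm
  rw [hpre]
  -- A is an upper set, bounded below by 0
  have hAup : ∀ s ∈ A, ∀ t, s ≤ t → t ∈ A := fun s hs t hst =>
    le_trans (hGanti hst) hs
  have hAbdd : BddBelow A := by
    refine ⟨0, fun t ht => ?_⟩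
    by_contra hlt
    push_neg at hlt
    have huniv : {y | t ≤ f y} = Set.univ := by
      ext y; simp only [Set.mem_setOf_eq, Set.mem_univ, iff_true]
      exact le_trans hlt.le (hf_nonneg y)
    have hGt1 : G t = 1 := by show μ _ = 1; rw [huniv]; exact measure_univ
    have ht' : G t ≤ a' := ht
    rw [hGt1] at ht'
    exact absurd (lt_of_le_of_lt ht' ha'lt1) (lt_irrefl _)
  by_cases hAne : A.Nonempty
  · -- nonempty case : compute the measure via c = sInf A
    set c := sInf A with hc
    -- G c ≤ a'
    have hGc_le : G c ≤ a' := by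
      have hmem : ∀ n : ℕ, c + 1 / (n + 1) ∈ A := by
        intro n
        have hpos : (0:ℝ) < 1 / (n + 1) := by positivity
        obtain ⟨s, hsA, hs⟩ := (csInf_lt_iff hAbdd hAne).mp
          (by linarith : sInf A < c + 1 / (n + 1))
        exact hAup s hsA _ hs.le
      have hsplit : {y | c ≤ f y} ⊆ {y | c < f y} ∪ {y | f y = c} := by
        intro y (hy : c ≤ f y)
        rcases hy.lt_or_eq with h | h
        · exact Or.inl h
        · exact Or.inr h.symm
      have hunion : {y | c < f y} = ⋃ n : ℕ, {y | c + 1 / (n + 1) ≤ f y} := by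
        ext y
        simp only [Set.mem_setOf_eq, Set.mem_iUnion]
        constructor
        · intro h
          obtain ⟨n, hn⟩ := exists_nat_one_div_lt (by linarith : (0:ℝ) < f y - c)
          exact ⟨n, by push_cast at hn ⊢; linarith⟩
        · rintro ⟨n, hn⟩
          have hpos : (0:ℝ) < 1 / (n + 1) := by positivity
          linarith
      have hlt_le : μ {y | c < f y} ≤ a' := by
        rw [hunion]
        have hdir : Directed (· ⊆ ·) (fun n : ℕ => {y | c + 1 / (n + 1) ≤ f y}) := by
          have hmono : Monotone (fun n : ℕ => {y | c + 1 / (n + 1) ≤ f y}) := by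
            intro m n hmn y (hy : c + 1 / (m + 1) ≤ f y)
            have : (1:ℝ) / (n + 1) ≤ 1 / (m + 1) := by
              apply one_div_le_one_div_of_le (by positivity)
              push_cast; exact_mod_cast by exact_mod_cast add_le_add_left (Nat.cast_le.mpr hmn) 1
            show c + 1 / (n + 1) ≤ f y
            linarith
          exact hmono.directed_le
        rw [hdir.measure_iUnion]
        exact iSup_le fun n => hmem n
      calc G c ≤ μ ({y | c < f y} ∪ {y | f y = c}) := measure_mono hsplit
        _ ≤ μ {y | c < f y} + μ {y | f y = c} := measure_union_le _ _
        _ = μ {y | c < f y} := by rw [hatom c, add_zero]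
        _ ≤ a' := hlt_le
    -- a' ≤ G c
    have hGc_ge : a' ≤ G c := by
      have hinter : {y | c ≤ f y} = ⋂ n : ℕ, {y | c - 1 / (n + 1) ≤ f y} := by
        ext y
        simp only [Set.mem_setOf_eq, Set.mem_iInter]
        constructor
        · intro h n
          have hpos : (0:ℝ) < 1 / (n + 1) := by positivity
          linarith
        · intro h
          by_contra hlt
          push_neg at hlt
          obtain ⟨n, hn⟩ := exists_nat_one_div_lt (by linarith : (0:ℝ) < c - f y)
          have := h n
          push_cast at hn this
          linarith
      have hdir : Directed (· ⊇ ·) (fun n : ℕ => {y | c - 1 / (n + 1) ≤ f y}) := by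
        have hanti : Antitone (fun n : ℕ => {y | c - 1 / (n + 1) ≤ f y}) := by
          intro m n hmn y (hy : c - 1 / (n + 1) ≤ f y)
          have : (1:ℝ) / (n + 1) ≤ 1 / (m + 1) := by
            apply one_div_le_one_div_of_le (by positivity)
            exact_mod_cast add_le_add_left (Nat.cast_le.mpr hmn) 1
          show c - 1 / (m + 1) ≤ f y
          linarith
        exact hanti.directed_ge
      have := Directed.measure_iInter (μ := μ)
        (fun n => (hGset _).nullMeasurableSet) hdir ⟨0, measure_ne_top μ _⟩
      have hGceq : G c = ⨅ n : ℕ, μ {y | c - 1 / (n + 1) ≤ f y} := by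
        rw [hG]; simp only; rw [hinter, this]
      rw [hGceq]
      refine le_iInf fun n => ?_
      have hpos : (0:ℝ) < 1 / (n + 1) := by positivity
      have hnotmem : c - 1 / (n + 1) ∉ A := fun hmem =>
        absurd (csInf_le hAbdd hmem) (by push_neg; linarith)
      exact le_of_not_ge hnotmem
    have hGc : G c = a' := le_antisymm hGc_le hGc_ge
    -- sandwich f ⁻¹' A between {c < f} and {c ≤ f}
    have hsub1 : {y | c < f y} ⊆ f ⁻¹' A := by
      intro y (hy : c < f y)
      obtain ⟨s, hsA, hs⟩ := (csInf_lt_iff hAbdd hAne).mp hy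
      exact hAup s hsA _ hs.le
    have hsub2 : f ⁻¹' A ⊆ {y | c ≤ f y} := fun y hy => csInf_le hAbdd hy
    have hlower : a' ≤ μ (f ⁻¹' A) := by
      refine le_trans ?_ (measure_mono hsub1)
      have hsplit : {y | c ≤ f y} ⊆ {y | c < f y} ∪ {y | f y = c} := by
        intro y (hy : c ≤ f y)
        rcases hy.lt_or_eq with h | h
        · exact Or.inl h
        · exact Or.inr h.symm
      calc a' = G c := hGc.symm
        _ ≤ μ {y | c < f y} + μ {y | f y = c} :=
            le_trans (measure_mono hsplit) (measure_union_le _ _)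
        _ = μ {y | c < f y} := by rw [hatom c, add_zero]
    have hupper : μ (f ⁻¹' A) ≤ a' := le_trans (measure_mono hsub2) (hGc_le)
    exact le_antisymm hupper hlower
  · -- A empty : a must be 0
    have hAempty : A = ∅ := Set.not_nonempty_iff_eq_empty.mp hAne
    have ha'0 : a' = 0 := by
      by_contra ha'ne
      have ha'pos : 0 < a' := pos_iff_ne_zero.mpr ha'ne
      -- G n → 0, so there is n with G n < a'
      have hempt : (⋂ n : ℕ, {y | (n:ℝ) ≤ f y}) = ∅ := by
        ext y
        simp only [Set.mem_iInter, Set.mem_setOf_eq, Set.mem_empty_iff_false, iff_false, not_forall]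
        obtain ⟨n, hn⟩ := exists_nat_gt (f y)
        exact ⟨n, by push_neg; exact hn⟩
      have hdir : Directed (· ⊇ ·) (fun n : ℕ => {y | (n:ℝ) ≤ f y}) := by
        have hanti : Antitone (fun n : ℕ => {y | (n:ℝ) ≤ f y}) := by
          intro m n hmn y (hy : (n:ℝ) ≤ f y)
          exact le_trans (Nat.cast_le.mpr hmn) hy
        exact hanti.directed_ge
      have hiInf : (⨅ n : ℕ, μ {y | (n:ℝ) ≤ f y}) = 0 := by
        rw [← Directed.measure_iInter (μ := μ)
          (fun n => (hGset _).nullMeasurableSet) hdir ⟨0, measure_ne_top μ _⟩, hempt,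
          measure_empty]
      have : ∃ n : ℕ, μ {y | (n:ℝ) ≤ f y} < a' := by
        by_contra hall
        push_neg at hall
        have : a' ≤ ⨅ n : ℕ, μ {y | (n:ℝ) ≤ f y} := le_iInf hall
        rw [hiInf] at this
        exact ha'ne (le_antisymm this zero_le)
      obtain ⟨n, hn⟩ := this
      exact hAne ⟨(n:ℝ), hn.le⟩
    have ha0' : a = 0 := le_antisymm (by
      by_contra hpos
      push_neg at hpos
      exact absurd ha'0 (ne_of_gt (ENNReal.ofReal_pos.mpr hpos))) ha0
    rw [hAempty, ha', ha0']
    simp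
end

section
/- Let 𝒳 and 𝒵 be measurable spaces, μ a probability measure on 𝒳, κ a Markov kernel from 𝒳 to a measurable space 𝒴 equipped with a σ-finite reference measure λ, with joint law μ ⊗ κ (the composition-product). Suppose there exist a measurable function g : 𝒳 → 𝒵, a measurable family of probability densities f : 𝒵 × 𝒴 → [0,∞) with respect to λ, and a Markov kernel η from 𝒵 to 𝒴 with η(z) = λ.withDensity f(z, ·) for every z, such that: (i) η is a version of the conditional distribution of Y given g(X), i.e., the pushforward of μ ⊗ κ under (x, y) ↦ (g(x), y) equals (g_*μ) ⊗ η. Assume further that (ii) for g_*μ-almost every z and η(z)-almost every y, η(z)({y' : f(z, y') = f(z, y)}) = 0. Define the HPD value of the model κ̂(x) := η(g(x)) at (x, y) as H(x, y) = η(g(x))({y' : f(g(x), y') ≥ f(g(x), y)}). Then the pushforward of μ ⊗ κ under the map (x, y) ↦ H(x, y) equals the uniform distribution on [0,1]. -/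
open MeasureTheory ProbabilityTheory

section AuxHPD
open Set Filter Topology
open scoped ENNReal

lemma survival_map_eq_uniform (V : Measure ℝ) [IsProbabilityMeasure V]
    (h0 : ∀ t : ℝ, V {t} = 0) :
    V.map (fun t => (V (Set.Ici t)).toReal) = volume.restrict (Set.Icc (0:ℝ) 1) := by
  haveI : NoAtoms V := ⟨h0⟩
  set S : ℝ → ℝ := fun t => (V (Set.Ici t)).toReal with hS
  have hfin : ∀ t, V (Ici t) ≠ ⊤ := fun t => measure_ne_top V _
  have hS_anti : Antitone S := fun a b hab =>
    ENNReal.toReal_le_toReal (hfin b) (hfin a) |>.2 (measure_mono (Ici_subset_Ici.2 hab))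
  have hS_meas : Measurable S := hS_anti.measurable
  have hS_nonneg : ∀ t, 0 ≤ S t := fun t => ENNReal.toReal_nonneg
  have hS_le_one : ∀ t, S t ≤ 1 := fun t => by
    simpa [hS] using ENNReal.toReal_le_of_le_ofReal zero_le_one (by simpa using prob_le_one)
  -- limits of V (Ici t)
  have htop : Tendsto (fun t : ℝ => V (Ici t)) atTop (𝓝 0) := by
    have h1 : Tendsto (V ∘ fun t : ℝ => Ici t) atTop (𝓝 (V (⋂ t : ℝ, Ici t))) :=
      tendsto_measure_iInter_atTop (fun t => measurableSet_Ici.nullMeasurableSet)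
        (fun a b hab => Ici_subset_Ici.2 hab) ⟨0, hfin 0⟩
    have h2 : (⋂ t : ℝ, Ici t) = ∅ := by
      ext x; simp only [mem_iInter, mem_Ici, mem_empty_iff_false, iff_false, not_forall]
      exact ⟨x + 1, by push_neg; linarith⟩
    simpa [h2, Function.comp_def] using h1
  have hbot : Tendsto (fun t : ℝ => V (Ici t)) atBot (𝓝 1) := by
    have h1 : Tendsto (V ∘ fun t : ℝ => Ici t) atBot (𝓝 (V (⋃ t : ℝ, Ici t))) :=
      tendsto_measure_iUnion_atBot (fun a b hab => Ici_subset_Ici.2 hab)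
    have h2 : (⋃ t : ℝ, Ici t) = univ := by
      ext x; simp only [mem_iUnion, mem_Ici, mem_univ, iff_true]; exact ⟨x, le_refl x⟩
    simpa [h2, Function.comp_def] using h1
  -- main claim
  have claim : ∀ u : ℝ, V {t | S t ≤ u} = ENNReal.ofReal (min u 1) := by
    intro u
    rcases le_or_gt 1 u with hu1 | hu1
    · have : {t | S t ≤ u} = univ := eq_univ_of_forall fun t => (hS_le_one t).trans hu1
      rw [this, min_eq_right hu1]
      simp
    rcases lt_or_ge u 0 with hu0 | hu0
    · have : {t | S t ≤ u} = ∅ := eq_empty_of_forall_notMem fun t ht =>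
        absurd (le_trans (hS_nonneg t) ht) (not_le.2 hu0)
      rw [this]
      simp [ENNReal.ofReal_eq_zero.2 (min_le_of_left_le hu0.le)]
    -- 0 ≤ u < 1
    have hmin : min u 1 = u := min_eq_left hu1.le
    rw [hmin]
    set A : Set ℝ := {t | S t ≤ u} with hA
    by_cases hAne : A.Nonempty
    · -- bounded below
      have hofu_lt : ENNReal.ofReal u < 1 := by
        rw [← ENNReal.ofReal_one]; exact ENNReal.ofReal_lt_ofReal_iff_of_nonneg hu0 |>.2 hu1
      obtain ⟨t₀, ht₀⟩ : ∃ t₀ : ℝ, ENNReal.ofReal u < V (Ici t₀) := by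
        have := hbot.eventually_const_lt hofu_lt
        rcases this.exists with ⟨t₀, ht₀⟩; exact ⟨t₀, ht₀⟩
      have hAle : ∀ a ∈ A, V (Ici a) ≤ ENNReal.ofReal u := fun a ha =>
        (ENNReal.le_ofReal_iff_toReal_le (hfin a) hu0).2 ha
      have hbdd : BddBelow A := ⟨t₀, fun a ha => by
        by_contra h
        push_neg at h
        exact absurd ((measure_mono (Ici_subset_Ici.2 h.le)).trans (hAle a ha))
          (not_le.2 ht₀)⟩
      set τ := sInf A with hτ
      have hIoiA : Ioi τ ⊆ A := fun s hs => by
        obtain ⟨a, haA, has⟩ := (csInf_lt_iff hbdd hAne).1 hs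
        exact le_trans (hS_anti has.le) haA
      have hAIci : A ⊆ Ici τ := fun a ha => csInf_le hbdd ha
      have hio : V (Ioi τ) = V (Ici τ) := measure_congr (Ioi_ae_eq_Ici' (h0 τ))
      -- upper bound : V (Ioi τ) ≤ ofReal u
      have hupper : V (Ioi τ) ≤ ENNReal.ofReal u := by
        have hsets : Monotone (fun n : ℕ => Ici (τ + 1 / (n + 1))) := by
          intro a b hab
          apply Ici_subset_Ici.2
          have hc : (a:ℝ) ≤ b := Nat.cast_le.2 hab
          have : (1:ℝ) / (b + 1) ≤ 1 / (a + 1) := by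
            apply one_div_le_one_div_of_le
            · positivity
            · linarith
          linarith
        have hun : (⋃ n : ℕ, Ici (τ + 1 / ((n:ℝ) + 1))) = Ioi τ := by
          ext x
          simp only [mem_iUnion, mem_Ici, mem_Ioi]
          constructor
          · rintro ⟨n, hn⟩; have : (0:ℝ) < 1 / ((n:ℝ)+1) := by positivity
            linarith
          · intro hx
            obtain ⟨n, hn⟩ := exists_nat_one_div_lt (sub_pos.2 hx)
            exact ⟨n, by linarith⟩
        have h1 : Tendsto (V ∘ fun n : ℕ => Ici (τ + 1 / ((n:ℝ) + 1))) atTop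
            (𝓝 (V (⋃ n : ℕ, Ici (τ + 1 / ((n:ℝ) + 1))))) :=
          tendsto_measure_iUnion_atTop hsets
        rw [hun] at h1
        refine le_of_tendsto h1 (Eventually.of_forall fun n => ?_)
        have hmem : τ + 1 / ((n:ℝ) + 1) ∈ A := by
          apply hIoiA
          simp only [mem_Ioi]
          have : (0:ℝ) < 1/((n:ℝ)+1) := by positivity
          linarith
        exact hAle _ hmem
      -- lower bound : ofReal u ≤ V (Ici τ)
      have hlower : ENNReal.ofReal u ≤ V (Ici τ) := by
        have hsets : Antitone (fun n : ℕ => Ici (τ - 1 / ((n:ℝ) + 1))) := by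
          intro a b hab
          apply Ici_subset_Ici.2
          have hc : (a:ℝ) ≤ b := Nat.cast_le.2 hab
          have : (1:ℝ) / (b + 1) ≤ 1 / (a + 1) := by
            apply one_div_le_one_div_of_le
            · positivity
            · linarith
          linarith
        have hin : (⋂ n : ℕ, Ici (τ - 1 / ((n:ℝ) + 1))) = Ici τ := by
          ext x
          simp only [mem_iInter, mem_Ici]
          constructor
          · intro h
            by_contra hx
            push_neg at hx
            obtain ⟨n, hn⟩ := exists_nat_one_div_lt (sub_pos.2 hx)
            have := h n; linarith
          · intro hx n; have : (0:ℝ) < 1 / ((n:ℝ)+1) := by positivity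
            linarith
        have h1 : Tendsto (V ∘ fun n : ℕ => Ici (τ - 1 / ((n:ℝ) + 1))) atTop
            (𝓝 (V (⋂ n : ℕ, Ici (τ - 1 / ((n:ℝ) + 1))))) :=
          tendsto_measure_iInter_atTop (fun n => measurableSet_Ici.nullMeasurableSet) hsets
            ⟨0, hfin _⟩
        rw [hin] at h1
        refine ge_of_tendsto h1 (Eventually.of_forall fun n => ?_)
        have hnot : τ - 1 / ((n:ℝ) + 1) ∉ A := fun h => by
          have := csInf_le hbdd h
          have hpos : (0:ℝ) < 1 / ((n:ℝ)+1) := by positivity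
          rw [← hτ] at this; linarith
        have : u < S (τ - 1 / ((n:ℝ) + 1)) := not_le.1 hnot
        exact le_of_lt ((ENNReal.ofReal_lt_iff_lt_toReal hu0 (hfin _)).2 this)
      have hval : V (Ici τ) = ENNReal.ofReal u := le_antisymm (hio ▸ hupper) hlower
      exact le_antisymm (le_trans (measure_mono hAIci) hval.le)
        (by rw [← hval, ← hio]; exact measure_mono hIoiA)
    · -- A empty : then u must be 0
      rw [not_nonempty_iff_eq_empty.1 hAne]
      rcases eq_or_lt_of_le hu0 with h | h
      · simp [← h]
      · exfalso
        have hpos : (0:ℝ≥0∞) < ENNReal.ofReal u := ENNReal.ofReal_pos.2 h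
        obtain ⟨t, ht⟩ := (htop.eventually_lt_const hpos).exists
        exact absurd (⟨t, ENNReal.toReal_le_of_le_ofReal hu0 ht.le⟩ : A.Nonempty) hAne
  -- conclude by ext of Iic
  haveI : IsProbabilityMeasure (V.map S) := Measure.isProbabilityMeasure_map hS_meas.aemeasurable
  refine Measure.ext_of_Iic _ _ fun u => ?_
  rw [Measure.map_apply hS_meas measurableSet_Iic]
  have hpre : S ⁻¹' Iic u = {t | S t ≤ u} := rfl
  rw [hpre, claim u, Measure.restrict_apply measurableSet_Iic]
  have hset : Iic u ∩ Icc 0 1 = Icc 0 (min u 1) := by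
    ext x; simp only [mem_inter_iff, mem_Iic, mem_Icc, le_min_iff]
    tauto
  rw [hset, Real.volume_Icc, sub_zero]

lemma fiber_map_eq_uniform {𝒴 : Type*} [MeasurableSpace 𝒴]
    (ν : Measure 𝒴) [IsProbabilityMeasure ν] (w : 𝒴 → ℝ) (hw : Measurable w)
    (hlev : ∀ᵐ y ∂ν, ν {y' | w y' = w y} = 0) :
    ν.map (fun y => (ν {y' | w y' ≥ w y}).toReal) = volume.restrict (Set.Icc (0:ℝ) 1) := by
  set V : Measure ℝ := ν.map w with hV
  haveI : IsProbabilityMeasure V := Measure.isProbabilityMeasure_map hw.aemeasurable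
  have hpre_eq : ∀ y, {y' | w y' = w y} = w ⁻¹' {w y} := fun y => rfl
  have h0 : ∀ t : ℝ, V {t} = 0 := by
    intro t
    by_contra h
    have hpos : 0 < V {t} := pos_iff_ne_zero.2 h
    rw [hV, Measure.map_apply hw (measurableSet_singleton t)] at hpos
    -- the a.e. set must intersect w ⁻¹' {t}
    have hns : (w ⁻¹' {t} ∩ {y | ν {y' | w y' = w y} = 0}).Nonempty := by
      by_contra hempty
      rw [Set.not_nonempty_iff_eq_empty] at hempty
      have hsub : w ⁻¹' {t} ⊆ {y | ν {y' | w y' = w y} = 0}ᶜ := fun y hy hy' =>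
        Set.eq_empty_iff_forall_notMem.1 hempty y ⟨hy, hy'⟩
      have : ν (w ⁻¹' {t}) = 0 := le_antisymm ((measure_mono hsub).trans_eq hlev) (by simp)
      exact absurd this hpos.ne'
    obtain ⟨y, hyt, hy0⟩ := hns
    rw [Set.mem_preimage, Set.mem_singleton_iff] at hyt
    have hset : {y' | w y' = w y} = w ⁻¹' {t} := by
      ext y'; simp [Set.mem_preimage, Set.mem_singleton_iff, hyt]
    rw [Set.mem_setOf_eq, hset] at hy0
    exact absurd hy0 hpos.ne'
  have hfun : (fun y => (ν {y' | w y' ≥ w y}).toReal)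
      = (fun t => (V (Set.Ici t)).toReal) ∘ w := by
    funext y
    simp only [Function.comp_apply, hV, Measure.map_apply hw measurableSet_Ici]
    rfl
  rw [hfun, ← Measure.map_map (Antitone.measurable (fun a b hab =>
    ENNReal.toReal_le_toReal (measure_ne_top V _) (measure_ne_top V _) |>.2
      (measure_mono (Set.Ici_subset_Ici.2 hab)))) hw]
  exact survival_map_eq_uniform V h0

end AuxHPD

/-- HPD values are insensitive to covariate transformations: if the estimated
conditional distribution is `κ̂ x = η (g x)`, where `η z = lam.withDensity (f z ·)`
is a version of the conditional distribution of `Y` given `g X`, with a.e.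
non-atomic density level sets, then the HPD values of the joint law `μ ⊗ₘ κ` are
uniform on `[0,1]`. -/
theorem hpd_insensitive_to_covariate_transformations
    {𝒳 𝒵 𝒴 : Type*} [MeasurableSpace 𝒳] [MeasurableSpace 𝒵] [MeasurableSpace 𝒴]
    (lam : Measure 𝒴) [SigmaFinite lam]
    (μ : Measure 𝒳) [IsProbabilityMeasure μ]
    (κ : Kernel 𝒳 𝒴) [IsMarkovKernel κ]
    (g : 𝒳 → 𝒵) (hg : Measurable g)
    (f : 𝒵 → 𝒴 → ℝ) (hf_nonneg : ∀ z y, 0 ≤ f z y)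
    (hf_meas : Measurable (Function.uncurry f))
    (η : Kernel 𝒵 𝒴) [IsMarkovKernel η]
    (hdens : ∀ z, η z = lam.withDensity (fun y => ENNReal.ofReal (f z y)))
    (hcond : (μ ⊗ₘ κ).map (fun p => (g p.1, p.2)) = (μ.map g) ⊗ₘ η)
    (hlevel : ∀ᵐ z ∂(μ.map g), ∀ᵐ y ∂(η z), η z {y' | f z y' = f z y} = 0) :
    (μ ⊗ₘ κ).map
        (fun p => (η (g p.1) {y' | f (g p.1) y' ≥ f (g p.1) p.2}).toReal)
      = volume.restrict (Set.Icc (0 : ℝ) 1) := by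
  classical
  set T : 𝒵 → 𝒴 → ℝ := fun z y => (η z {y' | f z y' ≥ f z y}).toReal with hT
  have hfz_meas : ∀ z : 𝒵, Measurable (f z) := fun z =>
    hf_meas.comp (measurable_const.prodMk measurable_id)
  have hTeq : ∀ z y, (η z) {y' | f z y' ≥ f z y}
      = ∫⁻ y', (if f z y ≤ f z y' then ENNReal.ofReal (f z y') else 0) ∂lam := by
    intro z y
    have hAm : MeasurableSet {y' | f z y ≤ f z y'} :=
      measurableSet_le measurable_const (hfz_meas z)
    have h1 : {y' | f z y' ≥ f z y} = {y' | f z y ≤ f z y'} := rfl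
    rw [h1, hdens z, withDensity_apply _ hAm, ← lintegral_indicator hAm]
    simp [Set.indicator_apply]
  have hind : Measurable (fun q : (𝒵 × 𝒴) × 𝒴 =>
      if f q.1.1 q.1.2 ≤ f q.1.1 q.2 then ENNReal.ofReal (f q.1.1 q.2) else 0) := by
    have h1 : Measurable fun q : (𝒵 × 𝒴) × 𝒴 => f q.1.1 q.1.2 :=
      hf_meas.comp ((measurable_fst.fst).prodMk (measurable_fst.snd))
    have h2 : Measurable fun q : (𝒵 × 𝒴) × 𝒴 => f q.1.1 q.2 :=
      hf_meas.comp ((measurable_fst.fst).prodMk measurable_snd)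
    exact Measurable.ite (measurableSet_le h1 h2)
      (ENNReal.measurable_ofReal.comp h2) measurable_const
  have hG : Measurable fun p : 𝒵 × 𝒴 =>
      ∫⁻ y', (if f p.1 p.2 ≤ f p.1 y' then ENNReal.ofReal (f p.1 y') else 0) ∂lam :=
    hind.lintegral_prod_right'
  have hT_meas : Measurable (Function.uncurry T) := by
    have heq : Function.uncurry T = fun p : 𝒵 × 𝒴 =>
        (∫⁻ y', (if f p.1 p.2 ≤ f p.1 y' then ENNReal.ofReal (f p.1 y') else 0) ∂lam).toReal := by
      funext p
      simp only [Function.uncurry, hT]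
      rw [hTeq p.1 p.2]
    rw [heq]
    exact hG.ennreal_toReal
  haveI : IsProbabilityMeasure (μ.map g) := Measure.isProbabilityMeasure_map hg.aemeasurable
  have hψ : Measurable (fun p : 𝒳 × 𝒴 => (g p.1, p.2)) :=
    (hg.comp measurable_fst).prodMk measurable_snd
  have hcomp : (fun p : 𝒳 × 𝒴 => T (g p.1) p.2)
      = Function.uncurry T ∘ (fun p => (g p.1, p.2)) := rfl
  show (μ ⊗ₘ κ).map (fun p => T (g p.1) p.2) = volume.restrict (Set.Icc (0:ℝ) 1)
  rw [hcomp, ← Measure.map_map hT_meas hψ, hcond]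
  refine Measure.ext fun E hE => ?_
  rw [Measure.map_apply hT_meas hE, Measure.compProd_apply (hT_meas hE)]
  have hae : ∀ᵐ z ∂(μ.map g),
      (η z) (Prod.mk z ⁻¹' (Function.uncurry T ⁻¹' E))
        = (volume.restrict (Set.Icc (0:ℝ) 1)) E := by
    filter_upwards [hlevel] with z hz
    have hmap := fiber_map_eq_uniform (η z) (f z) (hfz_meas z) hz
    have hTz : Measurable (T z) := hT_meas.comp measurable_prodMk_left
    calc (η z) (Prod.mk z ⁻¹' (Function.uncurry T ⁻¹' E))
        = (η z) ((T z) ⁻¹' E) := rfl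
      _ = ((η z).map (T z)) E := (Measure.map_apply hTz hE).symm
      _ = _ := by rw [show (η z).map (T z)
            = (η z).map (fun y => (η z {y' | f z y' ≥ f z y}).toReal) from rfl, hmap]
  rw [lintegral_congr_ae hae, lintegral_const, measure_univ, mul_one]
end

section
/- Let 𝒳 be a measurable space, μ a probability measure on 𝒳, and κ a Markov kernel from 𝒳 to a measurable space 𝒴 equipped with a σ-finite reference measure λ, with joint law μ ⊗ κ (the composition-product). Suppose there is a measurable family of probability densities f : 𝒳 × 𝒴 → [0,∞) with respect to λ such that κ(x) = λ.withDensity f(x, ·) for μ-almost every x, and that for μ-almost every x and κ(x)-almost every y, κ(x)({y' : f(x, y') = f(x, y)}) = 0. Define the HPD value H(x, y) = κ(x)({y' : f(x, y') ≥ f(x, y)}). Then the pushforward of μ ⊗ κ under the map (x, y) ↦ H(x, y) equals the uniform distribution on [0,1]. -/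
open MeasureTheory ProbabilityTheory Set

/-- Key computation: for a nonatomic probability measure `ρ` on `ℝ` with survival
function `G t = ρ (Ici t)`, the measure of the sublevel set `{t | G t ≤ v}` is `v`
whenever `v < 1`. -/
lemma meas_survival_sublevel (ρ : Measure ℝ) [IsProbabilityMeasure ρ]
    (hatom : ∀ t : ℝ, ρ {t} = 0) {v : ENNReal} (hv : v < 1) :
    ρ {t | ρ (Ici t) ≤ v} = v := by
  set G : ℝ → ENNReal := fun t => ρ (Ici t) with hG
  have hG_anti : Antitone G := fun a b hab => measure_mono (Ici_subset_Ici.2 hab)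
  set A : Set ℝ := {t | G t ≤ v} with hA
  have hA_upper : ∀ ⦃t s : ℝ⦄, t ∈ A → t ≤ s → s ∈ A :=
    fun t s ht hts => le_trans (hG_anti hts) ht
  -- limit at -∞ : sup over n of G (-n) is 1
  have h_neg : (⨆ n : ℕ, G (-(n : ℝ))) = 1 := by
    have hmono : Monotone (fun n : ℕ => Ici (-(n : ℝ))) := by
      intro m n hmn
      exact Ici_subset_Ici.2 (by exact_mod_cast neg_le_neg (Nat.cast_le.2 hmn))
    have hunion : (⋃ n : ℕ, Ici (-(n : ℝ))) = univ := by
      ext t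
      simp only [mem_iUnion, mem_Ici, mem_univ, iff_true]
      obtain ⟨n, hn⟩ := exists_nat_ge (-t)
      exact ⟨n, by linarith⟩
    have := hmono.measure_iUnion (μ := ρ)
    rw [hunion, measure_univ] at this
    exact this.symm
  -- A is bounded below
  obtain ⟨n₀, hn₀⟩ : ∃ n : ℕ, v < G (-(n : ℝ)) := by
    by_contra h
    push_neg at h
    exact absurd (h_neg ▸ iSup_le h) (not_le.2 hv)
  have hA_bdd : BddBelow A := by
    refine ⟨-(n₀ : ℝ), fun t ht => ?_⟩
    by_contra hlt
    push_neg at hlt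
    exact absurd (hA_upper ht hlt.le) (not_le.2 hn₀)
  rcases eq_empty_or_nonempty A with hAe | hAne
  · -- A empty : v must be 0
    have h_pos : (⨅ n : ℕ, G (n : ℝ)) = 0 := by
      have hanti : Antitone (fun n : ℕ => Ici ((n : ℝ))) := by
        intro m n hmn
        exact Ici_subset_Ici.2 (by exact_mod_cast hmn)
      have hinter : (⋂ n : ℕ, Ici ((n : ℝ))) = ∅ := by
        ext t
        simp only [mem_iInter, mem_Ici, mem_empty_iff_false, iff_false, not_forall, not_le]
        obtain ⟨n, hn⟩ := exists_nat_gt t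
        exact ⟨n, hn⟩
      have := hanti.measure_iInter (μ := ρ)
        (fun n => measurableSet_Ici.nullMeasurableSet)
        ⟨0, measure_ne_top ρ _⟩
      rw [hinter, measure_empty] at this
      exact this.symm
    have hv0 : v = 0 := by
      by_contra hv0
      have : (⨅ n : ℕ, G (n : ℝ)) < v := h_pos ▸ pos_iff_ne_zero.2 hv0
      obtain ⟨n, hn⟩ := iInf_lt_iff.1 this
      have hmem : (n : ℝ) ∈ A := hn.le
      rw [hAe] at hmem
      exact hmem
    rw [hAe, hv0, measure_empty]
  · -- A nonempty; let a = sInf A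
    set a : ℝ := sInf A with ha
    have h_Ioi_sub : Ioi a ⊆ A := by
      intro t ht
      obtain ⟨t', ht', htt'⟩ := (csInf_lt_iff hA_bdd hAne).1 ht
      exact hA_upper ht' htt'.le
    have h_sub_Ici : A ⊆ Ici a := fun t ht => csInf_le hA_bdd ht
    have h_Ioi_Ici : ρ (Ioi a) = ρ (Ici a) := by
      have : ρ (Ici a) ≤ ρ (Ioi a) + ρ {a} := by
        rw [← Ioi_union_left]; exact measure_union_le _ _
      rw [hatom a, add_zero] at this
      exact le_antisymm (measure_mono Ioi_subset_Ici_self) this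
    have hρA : ρ A = G a := by
      refine le_antisymm (measure_mono h_sub_Ici) ?_
      show ρ (Ici a) ≤ ρ A
      rw [← h_Ioi_Ici]
      exact measure_mono h_Ioi_sub
    rw [hρA]
    -- G a ≤ v : right continuity modulo atom at a
    have h_le : G a ≤ v := by
      have hioi : ρ (Ioi a) = ⨆ n : ℕ, G (a + ((n : ℝ) + 1)⁻¹) := by
        have hmono : Monotone (fun n : ℕ => Ici (a + ((n : ℝ) + 1)⁻¹)) := by
          intro m n hmn
          apply Ici_subset_Ici.2
          have hc : (m : ℝ) ≤ (n : ℝ) := Nat.cast_le.2 hmn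
          have : ((n : ℝ) + 1)⁻¹ ≤ ((m : ℝ) + 1)⁻¹ := by
            apply inv_anti₀ (by positivity)
            linarith
          linarith
        have hunion : (⋃ n : ℕ, Ici (a + ((n : ℝ) + 1)⁻¹)) = Ioi a := by
          ext t
          simp only [mem_iUnion, mem_Ici, mem_Ioi]
          constructor
          · rintro ⟨n, hn⟩
            have : (0:ℝ) < ((n : ℝ) + 1)⁻¹ := by positivity
            linarith
          · intro ht
            obtain ⟨n, hn⟩ := exists_nat_one_div_lt (sub_pos.2 ht)
            refine ⟨n, ?_⟩
            rw [one_div] at hn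
            linarith
        rw [← hunion]
        exact hmono.measure_iUnion
      show ρ (Ici a) ≤ v
      rw [← h_Ioi_Ici, hioi]
      refine iSup_le fun n => ?_
      refine h_Ioi_sub ?_
      simp only [mem_Ioi]
      have : (0:ℝ) < ((n : ℝ) + 1)⁻¹ := by positivity
      linarith
    -- v ≤ G a : left continuity at a
    have h_ge : v ≤ G a := by
      have hici : G a = ⨅ n : ℕ, G (a - ((n : ℝ) + 1)⁻¹) := by
        have hanti : Antitone (fun n : ℕ => Ici (a - ((n : ℝ) + 1)⁻¹)) := by
          intro m n hmn
          apply Ici_subset_Ici.2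
          have hc : (m : ℝ) ≤ (n : ℝ) := Nat.cast_le.2 hmn
          have : ((n : ℝ) + 1)⁻¹ ≤ ((m : ℝ) + 1)⁻¹ := by
            apply inv_anti₀ (by positivity)
            linarith
          linarith
        have hinter : (⋂ n : ℕ, Ici (a - ((n : ℝ) + 1)⁻¹)) = Ici a := by
          ext t
          simp only [mem_iInter, mem_Ici]
          constructor
          · intro h
            by_contra hlt
            push_neg at hlt
            obtain ⟨n, hn⟩ := exists_nat_one_div_lt (sub_pos.2 hlt)
            rw [one_div] at hn
            have := h n
            linarith
          · intro h n
            have : (0:ℝ) < ((n : ℝ) + 1)⁻¹ := by positivity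
            linarith
        have := hanti.measure_iInter (μ := ρ)
          (fun n => measurableSet_Ici.nullMeasurableSet)
          ⟨0, measure_ne_top ρ _⟩
        rw [hinter] at this
        exact this
      rw [hici]
      refine le_iInf fun n => ?_
      have hnot : a - ((n : ℝ) + 1)⁻¹ ∉ A := by
        intro hmem
        have := h_sub_Ici hmem
        simp only [mem_Ici] at this
        have hpos : (0:ℝ) < ((n : ℝ) + 1)⁻¹ := by positivity
        linarith
      exact (not_le.1 hnot).le
    exact le_antisymm h_le h_ge

/-- The survival function of a nonatomic probability measure on `ℝ` pushes it
forward to the uniform distribution on `[0,1]`. -/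
lemma map_survival_uniform (ρ : Measure ℝ) [IsProbabilityMeasure ρ]
    (hatom : ∀ t : ℝ, ρ {t} = 0) :
    ρ.map (fun t => (ρ (Ici t)).toReal) = volume.restrict (Icc (0 : ℝ) 1) := by
  set S : ℝ → ℝ := fun t => (ρ (Ici t)).toReal with hS
  have hS_anti : Antitone S := fun a b hab =>
    ENNReal.toReal_mono (measure_ne_top ρ _) (measure_mono (Ici_subset_Ici.2 hab))
  have hS_meas : Measurable S := hS_anti.measurable
  have hS_nonneg : ∀ t, 0 ≤ S t := fun t => ENNReal.toReal_nonneg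
  have hS_le_one : ∀ t, S t ≤ 1 := fun t => by
    rw [hS]
    exact ENNReal.toReal_le_of_le_ofReal zero_le_one (by simpa using prob_le_one)
  haveI : IsProbabilityMeasure (ρ.map S) := Measure.isProbabilityMeasure_map hS_meas.aemeasurable
  refine Measure.ext_of_Iic (ρ.map S) _ fun u => ?_
  rw [Measure.map_apply hS_meas measurableSet_Iic,
    Measure.restrict_apply measurableSet_Iic]
  rcases lt_or_ge u 0 with hu | hu
  · have h1 : S ⁻¹' Iic u = ∅ := by
      ext t; simp only [mem_preimage, mem_Iic, mem_empty_iff_false, iff_false, not_le]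
      exact lt_of_lt_of_le hu (hS_nonneg t)
    have h2 : Iic u ∩ Icc (0:ℝ) 1 = ∅ := by
      ext t; simp only [mem_inter_iff, mem_Iic, mem_Icc, mem_empty_iff_false, iff_false]
      rintro ⟨h, h0, -⟩; linarith
    rw [h1, h2, measure_empty, measure_empty]
  rcases le_or_gt 1 u with hu1 | hu1
  · have h1 : S ⁻¹' Iic u = univ := by
      ext t; simp only [mem_preimage, mem_Iic, mem_univ, iff_true]
      exact le_trans (hS_le_one t) hu1
    have h2 : Iic u ∩ Icc (0:ℝ) 1 = Icc 0 1 := by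
      rw [inter_eq_right]
      intro t ht; exact le_trans ht.2 hu1
    rw [h1, h2, measure_univ, Real.volume_Icc]
    norm_num
  · -- 0 ≤ u < 1
    have h1 : S ⁻¹' Iic u = {t | ρ (Ici t) ≤ ENNReal.ofReal u} := by
      ext t
      simp only [mem_preimage, mem_Iic, mem_setOf_eq, hS]
      rw [← ENNReal.ofReal_toReal (measure_ne_top ρ (Ici t))]
      rw [ENNReal.ofReal_le_ofReal_iff hu, ENNReal.toReal_ofReal ENNReal.toReal_nonneg]
    have h2 : Iic u ∩ Icc (0:ℝ) 1 = Icc 0 u := by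
      ext t
      simp only [mem_inter_iff, mem_Iic, mem_Icc]
      constructor
      · rintro ⟨h, h0, -⟩; exact ⟨h0, h⟩
      · rintro ⟨h0, h⟩; exact ⟨h, h0, le_trans h hu1.le⟩
    rw [h1, h2, Real.volume_Icc,
      meas_survival_sublevel ρ hatom (by
        rw [← ENNReal.ofReal_one]
        exact (ENNReal.ofReal_lt_ofReal_iff zero_lt_one).2 hu1)]
    norm_num

/-- Per-measure probability integral transform for HPD values. -/
lemma map_hpd_uniform {𝒴 : Type*} [MeasurableSpace 𝒴] (ν : Measure 𝒴)
    [IsProbabilityMeasure ν] (g : 𝒴 → ℝ) (hg : Measurable g)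
    (hlev : ∀ᵐ y ∂ν, ν {y' | g y' = g y} = 0) :
    ν.map (fun y => (ν {y' | g y' ≥ g y}).toReal) = volume.restrict (Icc (0 : ℝ) 1) := by
  set ρ : Measure ℝ := ν.map g with hρ
  haveI : IsProbabilityMeasure ρ := Measure.isProbabilityMeasure_map hg.aemeasurable
  have hatom : ∀ t : ℝ, ρ {t} = 0 := by
    intro t
    rw [hρ, Measure.map_apply hg (measurableSet_singleton t)]
    by_contra h
    have hsub : (g ⁻¹' {t}) ⊆ {y | ¬ ν {y' | g y' = g y} = 0} := by
      intro y hy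
      simp only [mem_preimage, mem_singleton_iff] at hy
      simp only [mem_setOf_eq, hy]
      exact h
    exact h (measure_mono_null hsub hlev)
  have hfun : (fun y => (ν {y' | g y' ≥ g y}).toReal)
      = (fun t => (ρ (Ici t)).toReal) ∘ g := by
    funext y
    simp only [Function.comp_apply, hρ, Measure.map_apply hg measurableSet_Ici]
    rfl
  have hS_meas : Measurable (fun t => (ρ (Ici t)).toReal) := by
    have : Antitone (fun t => (ρ (Ici t)).toReal) := fun a b hab =>
      ENNReal.toReal_mono (measure_ne_top ρ _) (measure_mono (Ici_subset_Ici.2 hab))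
    exact this.measurable
  rw [hfun, ← Measure.map_map hS_meas hg]
  exact map_survival_uniform ρ hatom

/-- Global consistency implies uniform HPD values: if `κ x = lam.withDensity (f x ·)`
for `μ`-a.e. `x`, with a.e. non-atomic density level sets, then the pushforward of
the joint law `μ ⊗ₘ κ` under the HPD value map is uniform on `[0,1]`. -/
theorem hpd_uniform_of_global_consistency
    {𝒳 𝒴 : Type*} [MeasurableSpace 𝒳] [MeasurableSpace 𝒴]
    (lam : Measure 𝒴) [SigmaFinite lam]
    (μ : Measure 𝒳) [IsProbabilityMeasure μ]
    (κ : Kernel 𝒳 𝒴) [IsMarkovKernel κ]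
    (f : 𝒳 → 𝒴 → ℝ) (hf_nonneg : ∀ x y, 0 ≤ f x y)
    (hf_meas : Measurable (Function.uncurry f))
    (hdens : ∀ᵐ x ∂μ, κ x = lam.withDensity (fun y => ENNReal.ofReal (f x y)))
    (hlevel : ∀ᵐ x ∂μ, ∀ᵐ y ∂(κ x), κ x {y' | f x y' = f x y} = 0) :
    (μ ⊗ₘ κ).map (fun p => (κ p.1 {y' | f p.1 y' ≥ f p.1 p.2}).toReal)
      = volume.restrict (Set.Icc (0 : ℝ) 1) := by
  -- measurability of the HPD map
  set η : Kernel (𝒳 × 𝒴) 𝒴 := κ.comap Prod.fst measurable_fst with hη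
  have hT : MeasurableSet {q : (𝒳 × 𝒴) × 𝒴 | f q.1.1 q.2 ≥ f q.1.1 q.1.2} := by
    apply measurableSet_le
    · exact hf_meas.comp ((measurable_fst.fst).prodMk measurable_fst.snd)
    · exact hf_meas.comp ((measurable_fst.fst).prodMk measurable_snd)
  have hHmeas0 : Measurable fun p : 𝒳 × 𝒴 =>
      η p (Prod.mk p ⁻¹' {q : (𝒳 × 𝒴) × 𝒴 | f q.1.1 q.2 ≥ f q.1.1 q.1.2}) :=
    Kernel.measurable_kernel_prodMk_left hT
  have hHmeas : Measurable fun p : 𝒳 × 𝒴 => (κ p.1 {y' | f p.1 y' ≥ f p.1 p.2}).toReal := by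
    apply Measurable.ennreal_toReal
    convert hHmeas0 using 1
    rfl
  ext s hs
  rw [Measure.map_apply hHmeas hs, Measure.compProd_apply (hHmeas hs)]
  have hae : ∀ᵐ x ∂μ, κ x (Prod.mk x ⁻¹'
      ((fun p : 𝒳 × 𝒴 => (κ p.1 {y' | f p.1 y' ≥ f p.1 p.2}).toReal) ⁻¹' s))
      = volume.restrict (Icc (0 : ℝ) 1) s := by
    filter_upwards [hlevel] with x hx
    have hgx : Measurable (f x) := hf_meas.comp measurable_prodMk_left
    have hmx : Measurable fun y => (κ x {y' | f x y' ≥ f x y}).toReal :=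
      hHmeas.comp measurable_prodMk_left
    have : Prod.mk x ⁻¹'
        ((fun p : 𝒳 × 𝒴 => (κ p.1 {y' | f p.1 y' ≥ f p.1 p.2}).toReal) ⁻¹' s)
        = (fun y => (κ x {y' | f x y' ≥ f x y}).toReal) ⁻¹' s := rfl
    rw [this, ← Measure.map_apply hmx hs, map_hpd_uniform (κ x) (f x) hgx hx]
  rw [lintegral_congr_ae hae, lintegral_const, measure_univ, mul_one]
end
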